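/- arXiv:1609.03139 — 7 statements merged into one kernel-verified Lean document; each statement's English description precedes it below -/
import Mathlib

section
/- If a relation → on A has the Z-property for some map •, then → is semi-confluent: if a →* c and a → d, then there exists e with d →* e and c →* e. -/
/-- The Z-property for a relation `r` and map `f`. -/
def ZProp {A : Type*} (r : A → A → Prop) (f : A → A) : Prop :=
  ∀ a b, r a b → Relation.ReflTransGen r b (f a) ∧ Relation.ReflTransGen r (f a) (f b)

theorem z_semiconfluent {A : Type*} (r : A → A → Prop) (f : A → A) (hZ : ZProp r f) :
    ∀ a c d, Relation.ReflTransGen r a c → r a d →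
      ∃ e, Relation.ReflTransGen r d e ∧ Relation.ReflTransGen r c e := by
  have mono : ∀ x y, Relation.ReflTransGen r x y →
      Relation.ReflTransGen r (f x) (f y) := by
    intro x y h
    induction h with
    | refl => exact .refl
    | tail _ h ih => exact ih.trans (hZ _ _ h).2
  intro a c d hac had
  induction hac with
  | refl => exact ⟨d, .refl, .single had⟩
  | @tail b c hab hbc ih =>
    obtain ⟨e, hde, hbe⟩ := ih
    refine ⟨f e, hde.trans ?_, (hZ _ _ hbc).1.trans (mono _ _ hbe)⟩
    rcases hbe.cases_tail with rfl | ⟨x, _, hxe⟩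
    · exact Relation.ReflTransGen.head hbc (hZ _ _ hbc).1
    · exact (hZ _ _ hxe).1.trans (hZ _ _ hxe).2
end

section
/- If a relation → on A has the Z-property for some map •, then → is confluent: if a →* b and a →* c, then there exists d with b →* d and c →* d. -/
lemma z_strip {A : Type*} (r : A → A → Prop) (f : A → A) (hZ : ZProp r f)
    {a b c : A} (hab : r a b) (hac : Relation.ReflTransGen r a c) :
    ∃ d, Relation.ReflTransGen r b d ∧ Relation.ReflTransGen r c d := by
  have key : Relation.ReflTransGen r b (f c) ∧ Relation.ReflTransGen r c (f c) := by
    induction hac with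
    | refl =>
      obtain ⟨h1, _⟩ := hZ _ _ hab
      exact ⟨h1, .head hab h1⟩
    | tail hxy hyz ih =>
      obtain ⟨hz1, hz2⟩ := hZ _ _ hyz
      exact ⟨ih.1.trans hz2, hz1.trans hz2⟩
  exact ⟨f c, key.1, key.2⟩

theorem z_confluent {A : Type*} (r : A → A → Prop) (f : A → A) (hZ : ZProp r f) :
    ∀ a b c, Relation.ReflTransGen r a b → Relation.ReflTransGen r a c →
      ∃ d, Relation.ReflTransGen r b d ∧ Relation.ReflTransGen r c d := by
  intro a b c hab hac
  induction hab with
  | refl => exact ⟨c, hac, .refl⟩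
  | tail hxy hyz ih =>
    obtain ⟨d, hd1, hd2⟩ := ih
    obtain ⟨e, he1, he2⟩ := z_strip r f hZ hyz hd1
    exact ⟨e, he1, hd2.trans he2⟩
end

section
/- A relation → has the Z-property for a map • if and only if there exists a relation ⊸ such that → ⊆ ⊸ ⊆ →* and a ⊸ b implies b ⊸ a• (the angle property). -/
/-- The angle property for map `f` and relation `m`. -/
def AngleProp {A : Type*} (r : A → A → Prop) (f : A → A) (m : A → A → Prop) : Prop :=
  (∀ a b, r a b → m a b) ∧ (∀ a b, m a b → Relation.ReflTransGen r a b) ∧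
    (∀ a b, m a b → m b (f a))

lemma z_mono {A : Type*} {r : A → A → Prop} {f : A → A} (hz : ZProp r f)
    {a b : A} (h : Relation.ReflTransGen r a b) :
    Relation.ReflTransGen r (f a) (f b) := by
  induction h with
  | refl => exact Relation.ReflTransGen.refl
  | tail _ hbc ih => exact ih.trans (hz _ _ hbc).2

theorem z_iff_angle {A : Type*} (r : A → A → Prop) (f : A → A) :
    ZProp r f ↔ ∃ m : A → A → Prop, AngleProp r f m := by
  constructor
  · intro hz
    refine ⟨fun a b => Relation.ReflTransGen r a b ∧ Relation.ReflTransGen r b (f a),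
      fun a b hab => ⟨Relation.ReflTransGen.single hab, (hz a b hab).1⟩,
      fun a b h => h.1, fun a b h => ⟨h.2, z_mono hz h.1⟩⟩
  · rintro ⟨m, hrm, hms, hang⟩ a b hab
    have h1 := hang a b (hrm a b hab)
    exact ⟨hms _ _ h1, hms _ _ (hang _ _ h1)⟩
end

section
/- If a relation → has the Z-property for a map •, then the relation ⊸ defined by a ⊸ b iff (a →* b and b →* a•) satisfies → ⊆ ⊸ ⊆ →* and the angle property: a ⊸ b implies b ⊸ a•. -/
theorem z_development {A : Type*} (r : A → A → Prop) (f : A → A) (hZ : ZProp r f)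
    (m : A → A → Prop)
    (hm : ∀ a b, m a b ↔ Relation.ReflTransGen r a b ∧ Relation.ReflTransGen r b (f a)) :
    (∀ a b, r a b → m a b) ∧ (∀ a b, m a b → Relation.ReflTransGen r a b) ∧
      (∀ a b, m a b → m b (f a)) := by
  have hmono : ∀ a b, Relation.ReflTransGen r a b →
      Relation.ReflTransGen r (f a) (f b) := by
    intro a b h
    induction h with
    | refl => exact Relation.ReflTransGen.refl
    | tail _ hbc ih => exact ih.trans (hZ _ _ hbc).2
  refine ⟨fun a b hab => ?_, fun a b hab => ((hm a b).1 hab).1, fun a b hab => ?_⟩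
  · exact (hm a b).2 ⟨Relation.ReflTransGen.single hab, (hZ a b hab).1⟩
  · obtain ⟨h1, h2⟩ := (hm a b).1 hab
    exact (hm b (f a)).2 ⟨h2, hmono _ _ h1⟩
end

section
/- Self property: every λ-term β-reduces to its full superdevelopment, i.e., t →β* t• for all t. -/
/-- Untyped λ-terms in de Bruijn representation (terms up to α-equivalence). -/
inductive Lam : Type
  | var : Nat → Lam
  | app : Lam → Lam → Lam
  | abs : Lam → Lam
  deriving DecidableEq

namespace Lam

/-- Lift (shift up) free variables ≥ k. -/
def lift : Lam → Nat → Lam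
  | var i, k => if i < k then var i else var (i + 1)
  | app s t, k => app (lift s k) (lift t k)
  | abs t, k => abs (lift t (k + 1))

/-- Capture-avoiding substitution `t[x := u]`. -/
def subst : Lam → Nat → Lam → Lam
  | var i, k, u => if i < k then var i else if i = k then u else var (i - 1)
  | app s t, k, u => app (subst s k u) (subst t k u)
  | abs t, k, u => abs (subst t (k + 1) (lift u 0))

/-- `x` occurs free in a term. -/
def IsFree (x : Nat) : Lam → Prop
  | var i => i = x
  | app s t => IsFree x s ∨ IsFree x t
  | abs t => IsFree (x + 1) t

/-- β-reduction: the compatible closure of the β-rule. -/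
inductive Beta : Lam → Lam → Prop
  | beta (t s : Lam) : Beta (app (abs t) s) (subst t 0 s)
  | appL {s s' : Lam} (t : Lam) : Beta s s' → Beta (app s t) (app s' t)
  | appR (s : Lam) {t t' : Lam} : Beta t t' → Beta (app s t) (app s t')
  | abs {t t' : Lam} : Beta t t' → Beta (abs t) (abs t')

/-- Reflexive-transitive closure of β-reduction. -/
abbrev Betas : Lam → Lam → Prop := Relation.ReflTransGen Beta

/-- Application with built-in β-reduction at the root. -/
def appBeta : Lam → Lam → Lam
  | abs u, v => subst u 0 v
  | s, v => app s v

/-- The full-superdevelopment map. -/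
def dev : Lam → Lam
  | var i => var i
  | abs t => abs (dev t)
  | app s t => appBeta (dev s) (dev t)

end Lam

namespace Lam

theorem Betas.app_congr {s s' t t' : Lam} (hs : Betas s s') (ht : Betas t t') :
    Betas (app s t) (app s' t') :=
  (hs.lift (app · t) fun _ _ => Beta.appL t).trans (ht.lift (app s') fun _ _ => Beta.appR s')

theorem Betas.abs_congr {t t' : Lam} (h : Betas t t') : Betas (abs t) (abs t') :=
  h.lift abs fun _ _ => Beta.abs

theorem betas_appBeta (s t : Lam) : Betas (app s t) (appBeta s t) := by
  cases s with
  | abs u => exact .single (Beta.beta u t)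
  | var _ | app _ _ => exact .refl

end Lam

theorem self_dev (t : Lam) : Lam.Betas t (Lam.dev t) := by
  induction t with
  | var _ => exact .refl
  | abs _ ih => exact ih.abs_congr
  | app _ _ iha ihb => exact (iha.app_congr ihb).trans (Lam.betas_appBeta _ _)
end

section
/- Rhs property: for all λ-terms t, s and every variable x, t•[x := s•] →β* (t[x := s])•. -/
namespace Lam

/-!
Induction on `t`. The abstraction case only needs `dev` to commute with lifting. In the
application case, substitution commutes with `appBeta` up to `→β*`: a root redex `(λu) b`
contracted by `appBeta` becomes, after substituting, the contractum of the substituted redex by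
the substitution lemma `subst_subst`. Moreover `appBeta` is monotone for `→β*`, since a term
reached from an abstraction is again an abstraction.
-/

theorem lift_lift (t : Lam) (i k : Nat) (h : i ≤ k) :
    (t.lift i).lift (k + 1) = (t.lift k).lift i := by
  induction t generalizing i k with
  | var n => grind [lift]
  | app a b iha ihb => simp [lift, iha _ _ h, ihb _ _ h]
  | abs a ih => simp [lift, ih (i + 1) (k + 1) (by omega)]

theorem subst_lift (t u : Lam) (k : Nat) : (t.lift k).subst k u = t := by
  induction t generalizing k u with
  | var m => grind [lift, subst]
  | app a b iha ihb => simp [lift, subst, iha, ihb]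
  | abs a ih => simp [lift, subst, ih]

theorem lift_subst_of_le (t u : Lam) {k n : Nat} (h : k ≤ n) :
    (t.subst n u).lift k = (t.lift k).subst (n + 1) (u.lift k) := by
  induction t generalizing k n u with
  | var m => grind [lift, subst]
  | app a b iha ihb => simp [lift, subst, iha _ h, ihb _ h]
  | abs a ih =>
    simp only [lift, subst]
    rw [ih _ (by omega : k + 1 ≤ n + 1), lift_lift u 0 k (by omega)]

theorem lift_subst_of_ge (t u : Lam) {k n : Nat} (h : n ≤ k) :
    (t.subst n u).lift k = (t.lift (k + 1)).subst n (u.lift k) := by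
  induction t generalizing k n u with
  | var m => grind [lift, subst]
  | app a b iha ihb => simp [lift, subst, iha _ h, ihb _ h]
  | abs a ih =>
    simp only [lift, subst]
    rw [ih _ (by omega : n + 1 ≤ k + 1), lift_lift u 0 k (by omega)]

theorem subst_subst (t v w : Lam) {i k : Nat} (h : i ≤ k) :
    (t.subst i v).subst k w = (t.subst (k + 1) (w.lift i)).subst i (v.subst k w) := by
  induction t generalizing i k v w with
  | var m => grind [lift, subst, subst_lift]
  | app a b iha ihb => simp [subst, iha _ _ h, ihb _ _ h]
  | abs a ih =>
    simp only [subst]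
    rw [ih _ _ (by omega : i + 1 ≤ k + 1), lift_lift w 0 i (by omega),
      lift_subst_of_le v w (Nat.zero_le k)]

theorem Beta.lift {a a' : Lam} (h : Beta a a') (k : Nat) : Beta (a.lift k) (a'.lift k) := by
  induction h generalizing k with
  | beta t s =>
    rw [lift_subst_of_ge t s (Nat.zero_le k)]
    exact .beta _ _
  | appL t _ ih => exact .appL _ (ih k)
  | appR s _ ih => exact .appR _ (ih k)
  | abs _ ih => exact .abs (ih (k + 1))

theorem Beta.subst {a a' : Lam} (h : Beta a a') (k : Nat) (w : Lam) :
    Beta (a.subst k w) (a'.subst k w) := by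
  induction h generalizing k w with
  | beta t s =>
    rw [subst_subst t s w (Nat.zero_le k)]
    exact .beta _ _
  | appL t _ ih => exact .appL _ (ih k w)
  | appR s _ ih => exact .appR _ (ih k w)
  | abs _ ih => exact .abs (ih (k + 1) _)

namespace Betas

theorem abs {a a' : Lam} (h : Betas a a') : Betas a.abs a'.abs :=
  Relation.ReflTransGen.lift Lam.abs (fun _ _ => Beta.abs) _ _ h

theorem app {a a' b b' : Lam} (ha : Betas a a') (hb : Betas b b') :
    Betas (a.app b) (a'.app b') :=
  (Relation.ReflTransGen.lift (·.app b) (fun _ _ => Beta.appL b) _ _ ha).trans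
    (Relation.ReflTransGen.lift a'.app (fun _ _ => Beta.appR a') _ _ hb)

theorem lift {a a' : Lam} (h : Betas a a') (k : Nat) : Betas (a.lift k) (a'.lift k) :=
  Relation.ReflTransGen.lift (Lam.lift · k) (fun _ _ hb => hb.lift k) _ _ h

theorem subst_left {a a' : Lam} (h : Betas a a') (k : Nat) (w : Lam) :
    Betas (a.subst k w) (a'.subst k w) :=
  Relation.ReflTransGen.lift (Lam.subst · k w) (fun _ _ hb => hb.subst k w) _ _ h

theorem subst_right (a : Lam) {w w' : Lam} (h : Betas w w') (k : Nat) :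
    Betas (a.subst k w) (a.subst k w') := by
  induction a generalizing k w w' with
  | var m =>
    simp only [Lam.subst]
    split_ifs
    exacts [.refl, h, .refl]
  | app a b iha ihb => exact (iha h k).app (ihb h k)
  | abs a ih => exact (ih (h.lift 0) (k + 1)).abs

theorem subst {a a' w w' : Lam} (ha : Betas a a') (hw : Betas w w') (k : Nat) :
    Betas (a.subst k w) (a'.subst k w') :=
  (ha.subst_left k w).trans (subst_right a' hw k)

theorem abs_inv {u c : Lam} (h : Betas u.abs c) : ∃ u', c = u'.abs ∧ Betas u u' := by
  induction h with
  | refl => exact ⟨u, rfl, .refl⟩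
  | tail _ hbc ih =>
    obtain ⟨u', rfl, hu⟩ := ih
    cases hbc with
    | abs h' => exact ⟨_, rfl, hu.tail h'⟩

end Betas

theorem betas_app_appBeta (a b : Lam) : Betas (a.app b) (appBeta a b) := by
  cases a with
  | abs u => exact .single (.beta u b)
  | _ => exact .refl

theorem Betas.appBeta {a a' b b' : Lam} (ha : Betas a a') (hb : Betas b b') :
    Betas (appBeta a b) (appBeta a' b') := by
  cases a with
  | abs u =>
    obtain ⟨u', rfl, hu⟩ := ha.abs_inv
    exact hu.subst hb 0
  | _ => exact (ha.app hb).trans (betas_app_appBeta a' b')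

theorem subst_appBeta_betas (a b w : Lam) (k : Nat) :
    Betas ((appBeta a b).subst k w) (appBeta (a.subst k w) (b.subst k w)) := by
  cases a with
  | abs u =>
    simp only [appBeta, subst]
    rw [subst_subst u b w (Nat.zero_le k)]
  | _ => exact betas_app_appBeta _ _

theorem lift_appBeta (a b : Lam) (k : Nat) :
    (appBeta a b).lift k = appBeta (a.lift k) (b.lift k) := by
  cases a with
  | abs u => exact lift_subst_of_ge u b (Nat.zero_le k)
  | var i => simp only [appBeta, lift]; split_ifs <;> rfl
  | app s t => rfl

theorem dev_lift (t : Lam) (k : Nat) : (t.lift k).dev = t.dev.lift k := by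
  induction t generalizing k with
  | var i => simp only [lift, dev]; split_ifs <;> rfl
  | app a b iha ihb => simp [dev, lift, iha, ihb, lift_appBeta]
  | abs a ih => simp [dev, lift, ih]

end Lam

theorem rhs_dev (t s : Lam) (x : Nat) :
    Lam.Betas ((Lam.dev t).subst x (Lam.dev s)) (Lam.dev (t.subst x s)) := by
  induction t generalizing s x with
  | var i =>
    simp only [Lam.dev, Lam.subst]
    split_ifs <;> exact .refl
  | app a b iha ihb =>
    exact (Lam.subst_appBeta_betas _ _ _ x).trans ((iha s x).appBeta (ihb s x))
  | abs a ih =>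
    simp only [Lam.dev, Lam.subst]
    rw [← Lam.dev_lift s 0]
    exact (ih (s.lift 0) (x + 1)).abs
end

section
/- If a relation → has the angle property for a map • and some relation ⊸, then → has the Z-property for •. -/
theorem angle_imp_z {A : Type*} (r : A → A → Prop) (f : A → A) (m : A → A → Prop)
    (h : AngleProp r f m) : ZProp r f := by
  obtain ⟨h1, h2, h3⟩ := h
  intro a b hab
  have hm : m a b := h1 a b hab
  have hbf : m b (f a) := h3 a b hm
  exact ⟨h2 _ _ hbf, h2 _ _ (h3 b (f a) hbf)⟩
end
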